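/- Let σ be a syndrome attained by some error and let C, C' be classes having syndrome σ with n_max(C) > n_max(C'). Then there exists T₀ > 0 such that for all temperatures T with 0 < T < T₀ one has Z_T(C) > Z_T(C'); that is, at sufficiently low temperature the partition function of a class containing strictly more maximum probability errors strictly dominates. -/

import Mathlib

open Finset Filter

variable {𝓔 𝓢 𝓒 : Type*}

/-- Error probability `P(e) = exp(−E e / T_N) / Σ_{e'} exp(−E e' / T_N)`. -/
noncomputable def Perr [Fintype 𝓔] (E : 𝓔 → ℝ) (T_N : ℝ) (e : 𝓔) : ℝ :=
  Real.exp (-(E e) / T_N) / ∑ e' : 𝓔, Real.exp (-(E e') / T_N)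

/-- Class partition function `Z_T(C) = Σ_{e : c e = C} exp(−E e / T)`. -/
noncomputable def Zpf [Fintype 𝓔] [DecidableEq 𝓒] (c : 𝓔 → 𝓒) (E : 𝓔 → ℝ) (T : ℝ) (C : 𝓒) : ℝ :=
  ∑ e ∈ Finset.univ.filter (fun e => c e = C), Real.exp (-(E e) / T)

/-- Class probability `P(C) = Σ_{e : c e = C} P(e)`. -/
noncomputable def Pclass [Fintype 𝓔] [DecidableEq 𝓒] (c : 𝓔 → 𝓒) (E : 𝓔 → ℝ) (T_N : ℝ) (C : 𝓒) : ℝ :=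
  ∑ e ∈ Finset.univ.filter (fun e => c e = C), Perr E T_N e

/-- Syndrome probability `P(σ) = Σ_{e : s e = σ} P(e)`. -/
noncomputable def Psynd [Fintype 𝓔] [DecidableEq 𝓢] (s : 𝓔 → 𝓢) (E : 𝓔 → ℝ) (T_N : ℝ) (σ : 𝓢) : ℝ :=
  ∑ e ∈ Finset.univ.filter (fun e => s e = σ), Perr E T_N e

/-- The finite set of classes having syndrome `σ`. -/
abbrev classesOf [Fintype 𝓔] [DecidableEq 𝓢] [DecidableEq 𝓒] (s : 𝓔 → 𝓢) (c : 𝓔 → 𝓒) (σ : 𝓢) :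
    Finset 𝓒 :=
  (Finset.univ.filter (fun e => s e = σ)).image c

/-- `Max(σ,T)`: the classes `C` having syndrome `σ` maximizing `Z_T` among classes with syndrome `σ`. -/
noncomputable def MaxSet [Fintype 𝓔] [DecidableEq 𝓢] [DecidableEq 𝓒]
    (s : 𝓔 → 𝓢) (c : 𝓔 → 𝓒) (E : 𝓔 → ℝ) (σ : 𝓢) (T : ℝ) : Finset 𝓒 :=
  (classesOf s c σ).filter (fun C => ∀ C' ∈ classesOf s c σ, Zpf c E T C' ≤ Zpf c E T C)

/-- `n_max(C)`: the number of errors in class `C` attaining the minimal energy `Emin`. -/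
noncomputable def nmax [Fintype 𝓔] [DecidableEq 𝓒] (c : 𝓔 → 𝓒) (E : 𝓔 → ℝ) (Emin : ℝ) (C : 𝓒) : ℕ :=
  (Finset.univ.filter (fun e => c e = C ∧ E e = Emin)).card

/-! After multiplying by `exp (Emin / T)`, a class partition function becomes
`∑ exp ((Emin - E e) / T)`. For `C'`, every error has syndrome `σ` (as `c` refines `s`) and hence
energy at least `Emin`, so as `T → 0⁺` each term tends to `1` or `0` and the sum tends to
`n_max(C')`. For `C` the rescaled sum is always at least `n_max(C)`, its minimal-energy terms
being `1`. -/

open Real Topology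

lemma tendsto_exp_neg_div_nhdsGT_zero {a : ℝ} (ha : 0 < a) :
    Tendsto (fun T => exp (-a / T)) (𝓝[>] 0) (𝓝 0) := by
  have hdiv : Tendsto (fun T : ℝ => -a / T) (𝓝[>] 0) atBot := by
    simpa only [div_eq_mul_inv] using
      tendsto_inv_nhdsGT_zero.const_mul_atTop_of_neg (neg_neg_of_pos ha)
  exact tendsto_exp_atBot.comp hdiv

lemma tendsto_sum_exp_sub_div_nhdsGT_zero {ι : Type*} {s : Finset ι} {E : ι → ℝ} {m : ℝ}
    (hm : ∀ e ∈ s, m ≤ E e) :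
    Tendsto (fun T => ∑ e ∈ s, exp ((m - E e) / T)) (𝓝[>] 0) (𝓝 #{e ∈ s | E e = m}) := by
  rw [Finset.card_filter, Nat.cast_sum]
  refine tendsto_finsetSum s fun e he => ?_
  rcases (hm e he).eq_or_lt with h | h
  · simp [← h]
  · simpa [h.ne', neg_sub] using tendsto_exp_neg_div_nhdsGT_zero (sub_pos.2 h)

lemma card_filter_eq_le_sum_exp_sub_div {ι : Type*} (s : Finset ι) (E : ι → ℝ) (m T : ℝ) :
    (#{e ∈ s | E e = m} : ℝ) ≤ ∑ e ∈ s, exp ((m - E e) / T) := by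
  calc (#{e ∈ s | E e = m} : ℝ) = ∑ e ∈ s with E e = m, exp ((m - E e) / T) := by
        rw [Finset.card_eq_sum_ones, Nat.cast_sum]
        refine Finset.sum_congr rfl fun e he => ?_
        simp [(Finset.mem_filter.1 he).2]
    _ ≤ ∑ e ∈ s, exp ((m - E e) / T) :=
        Finset.sum_le_sum_of_subset_of_nonneg (Finset.filter_subset _ _)
          fun _ _ _ => (exp_pos _).le

lemma Zpf_eq_exp_mul_sum [Fintype 𝓔] [DecidableEq 𝓒] (c : 𝓔 → 𝓒) (E : 𝓔 → ℝ)
    (m T : ℝ) (C : 𝓒) :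
    Zpf c E T C = exp (-m / T) * ∑ e with c e = C, exp ((m - E e) / T) := by
  rw [Zpf, Finset.mul_sum]
  refine Finset.sum_congr rfl fun e _ => ?_
  rw [← exp_add]
  ring_nf

lemma nmax_eq_card_filter [Fintype 𝓔] [DecidableEq 𝓒] (c : 𝓔 → 𝓒)
    (E : 𝓔 → ℝ) (m : ℝ) (C : 𝓒) :
    nmax c E m C = #{e ∈ ({e | c e = C} : Finset 𝓔) | E e = m} := by
  rw [nmax, Finset.filter_filter]

theorem stmt8_general {𝓔 𝓢 𝓒 : Type*} [Fintype 𝓔] [DecidableEq 𝓒]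
    (s : 𝓔 → 𝓢) (c : 𝓔 → 𝓒) (E : 𝓔 → ℝ)
    (hrefine : ∀ e e' : 𝓔, c e = c e' → s e = s e')
    (σ : 𝓢)
    (Emin : ℝ) (hEmin : IsLeast (E '' {e | s e = σ}) Emin)
    (C C' : 𝓒) (hC' : ∃ e, c e = C' ∧ s e = σ)
    (hn : nmax c E Emin C' < nmax c E Emin C) :
    ∃ T₀ > (0:ℝ), ∀ T : ℝ, 0 < T → T < T₀ → Zpf c E T C' < Zpf c E T C := by
  obtain ⟨e₀, he₀c, he₀s⟩ := hC'
  have hge : ∀ e ∈ ({e | c e = C'} : Finset 𝓔), Emin ≤ E e := fun e he =>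
    hEmin.2 ⟨e, (hrefine e e₀ ((Finset.mem_filter.1 he).2.trans he₀c.symm)).trans he₀s, rfl⟩
  have hlim := tendsto_sum_exp_sub_div_nhdsGT_zero hge
  rw [← nmax_eq_card_filter] at hlim
  have hlt : (nmax c E Emin C' : ℝ) < nmax c E Emin C := by exact_mod_cast hn
  obtain ⟨T₀, hT₀, hbound⟩ :=
    (nhdsGT_basis (0 : ℝ)).eventually_iff.1 (hlim.eventually_lt_const hlt)
  refine ⟨T₀, hT₀, fun T hT hTT₀ => ?_⟩
  rw [Zpf_eq_exp_mul_sum c E Emin T C', Zpf_eq_exp_mul_sum c E Emin T C]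
  refine mul_lt_mul_of_pos_left ?_ (exp_pos _)
  calc _ < (nmax c E Emin C : ℝ) := hbound ⟨hT, hTT₀⟩
    _ ≤ _ := by rw [nmax_eq_card_filter]; exact card_filter_eq_le_sum_exp_sub_div _ _ _ _

/-- if `n_max(C) > n_max(C')` then at sufficiently low temperature
`Z_T(C) > Z_T(C')`. -/
theorem stmt8 {𝓔 𝓢 𝓒 : Type*} [Fintype 𝓔] [Nonempty 𝓔] [DecidableEq 𝓢] [DecidableEq 𝓒]
    (s : 𝓔 → 𝓢) (c : 𝓔 → 𝓒) (E : 𝓔 → ℝ)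
    (hrefine : ∀ e e' : 𝓔, c e = c e' → s e = s e')
    (σ : 𝓢) (hσ : ∃ e, s e = σ)
    (Emin : ℝ) (hEmin : IsLeast (E '' {e | s e = σ}) Emin)
    (C C' : 𝓒) (hC : ∃ e, c e = C ∧ s e = σ) (hC' : ∃ e, c e = C' ∧ s e = σ)
    (hn : nmax c E Emin C' < nmax c E Emin C) :
    ∃ T₀ > (0:ℝ), ∀ T : ℝ, 0 < T → T < T₀ → Zpf c E T C' < Zpf c E T C :=
  stmt8_general s c E hrefine σ Emin hEmin C C' hC' hn
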